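/- arXiv:0709.3208 — 2 statements merged into one kernel-verified Lean document; each statement's English description precedes it below -/
import Mathlib

section
/- Let λ, μ be real numbers with λ > 1 and μ > 1. Then there exists W such that for every integer w ≥ W, the polynomial D_w(p) = (1 − λ²p²)(1 − μ²p²) − (λ² − p²)(μ² − p²)p^{2w} has exactly 2w − 4 roots (counted with multiplicity) on the unit circle |p| = 1, and exactly 8 roots with |p| ≠ 1, all of which are real. -/
/-!
Write `w = m + 2`, so that `D_w` has degree `2m + 8`. It suffices to exhibit `2m` distinct roots
on the unit circle and `8` distinct real roots off it: by the degree bound these are all the roots.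

For `|E| = 1` one has `D_w(E) = E⁴ conj v - E^(2w) v` with `v = (λ² - E²)(μ² - E²)`, so `E` is a
root as soon as `E^m v` is real. For `E = e^{it}` an argument of `E^m v` is the continuous phase
`m t + arg (λ² - e^{2it}) + arg (μ² - e^{2it})` (both factors lie in the right half-plane), which
runs from `0` to `2πm` on `[0, 2π]` and so hits each of `0, π, …, (2m - 1)π` in `[0, 2π)`.

On the real axis `D_w(0) = 1`, `D_w(λ⁻¹) < 0`, and `D_w(c) → (1 - λ²c²)(1 - μ²c²) > 0` for
`max λ⁻¹ μ⁻¹ < c < 1`, so for large `w` there are roots `0 < s₁ < λ⁻¹ < s₂ < 1`. As `D_w` is even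
and `x^(2w+4) D_w(1/x) = -D_w(x)`, the eight numbers `±s₁^{±1}, ±s₂^{±1}` are roots as well.
-/

open Polynomial

/-- The denominator polynomial `D_w(p) = (1 − λ²p²)(1 − μ²p²) − (λ² − p²)(μ² − p²)p^{2w}`,
viewed as a polynomial over `ℂ` with real parameters `λ, μ`. -/
noncomputable def Dpoly (lam mu : ℝ) (w : ℕ) : Polynomial ℂ :=
  (1 - C ((lam : ℂ) ^ 2) * X ^ 2) * (1 - C ((mu : ℂ) ^ 2) * X ^ 2) -
    (C ((lam : ℂ) ^ 2) - X ^ 2) * (C ((mu : ℂ) ^ 2) - X ^ 2) * X ^ (2 * w)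

open Complex Filter Topology
open scoped Real

lemma Multiset.filter_add_of_forall {α : Type*} {p : α → Prop} [DecidablePred p]
    {s t : Multiset α} (hs : ∀ x ∈ s, p x) (ht : ∀ x ∈ t, ¬ p x) : (s + t).filter p = s := by
  rw [Multiset.filter_add, Multiset.filter_eq_self.2 hs, Multiset.filter_eq_nil.2 ht, add_zero]

lemma Polynomial.roots_eq_val_of_natDegree_le_card {R : Type*} [CommRing R] [IsDomain R]
    {p : R[X]} {s : Finset R} (hp : p ≠ 0) (hdeg : p.natDegree ≤ s.card)
    (hs : ∀ x ∈ s, p.IsRoot x) : p.roots = s.val := by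
  refine (Multiset.eq_of_le_of_card_le ?_ ?_).symm
  · exact (Multiset.le_iff_subset s.nodup).2 fun x hx => (mem_roots hp).2 (hs x hx)
  · exact (card_roots' p).trans hdeg

section Polynomial

variable {lam mu : ℝ} {w : ℕ}

lemma eval_Dpoly (z : ℂ) : (Dpoly lam mu w).eval z =
    (1 - (lam : ℂ) ^ 2 * z ^ 2) * (1 - (mu : ℂ) ^ 2 * z ^ 2) -
      ((lam : ℂ) ^ 2 - z ^ 2) * ((mu : ℂ) ^ 2 - z ^ 2) * z ^ (2 * w) := by
  simp [Dpoly]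

lemma Dpoly_ne_zero (hw : w ≠ 0) : Dpoly lam mu w ≠ 0 := by
  intro h
  have h0 := congrArg (eval 0) h
  simp [eval_Dpoly, zero_pow (by omega : 2 * w ≠ 0)] at h0

lemma natDegree_Dpoly_le : (Dpoly lam mu w).natDegree ≤ 2 * w + 4 := by
  unfold Dpoly
  compute_degree
  all_goals omega

end Polynomial

noncomputable def Dreal (lam mu : ℝ) (w : ℕ) (x : ℝ) : ℝ :=
  (1 - lam ^ 2 * x ^ 2) * (1 - mu ^ 2 * x ^ 2) - (lam ^ 2 - x ^ 2) * (mu ^ 2 - x ^ 2) * x ^ (2 * w)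

section Real

variable {lam mu : ℝ} {w : ℕ}

lemma eval_Dpoly_ofReal (x : ℝ) : (Dpoly lam mu w).eval (x : ℂ) = Dreal lam mu w x := by
  simp only [eval_Dpoly, Dreal]
  push_cast
  ring

lemma continuous_Dreal : Continuous (Dreal lam mu w) := by
  unfold Dreal
  fun_prop

lemma Dreal_neg (x : ℝ) : Dreal lam mu w (-x) = Dreal lam mu w x := by
  simp only [Dreal, neg_sq, pow_mul]

lemma pow_mul_Dreal_inv {x : ℝ} (hx : x ≠ 0) :
    x ^ (2 * w + 4) * Dreal lam mu w x⁻¹ = -Dreal lam mu w x := by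
  simp only [Dreal, pow_add, pow_mul, inv_pow]
  field_simp
  ring

lemma Dreal_zero (hw : w ≠ 0) : Dreal lam mu w 0 = 1 := by
  simp [Dreal, hw]

lemma Dreal_inv_neg (hlam : 1 < lam) (hmu : lam⁻¹ < mu) : Dreal lam mu w lam⁻¹ < 0 := by
  have hlam₀ : 0 < lam := by linarith
  have hinv : lam⁻¹ < lam := (inv_lt_one_of_one_lt₀ hlam).trans hlam
  have hinv₀ : 0 < lam⁻¹ := inv_pos.2 hlam₀
  have h₁ : 0 < lam ^ 2 - lam⁻¹ ^ 2 := by nlinarith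
  have h₂ : 0 < mu ^ 2 - lam⁻¹ ^ 2 := by nlinarith
  have hzero : 1 - lam ^ 2 * lam⁻¹ ^ 2 = 0 := by field_simp; ring
  rw [Dreal, hzero, zero_mul, zero_sub, neg_lt_zero]
  positivity

lemma tendsto_Dreal_atTop {x : ℝ} (hx : |x| < 1) :
    Tendsto (fun w => Dreal lam mu w x) atTop
      (𝓝 ((1 - lam ^ 2 * x ^ 2) * (1 - mu ^ 2 * x ^ 2))) := by
  have hpow : Tendsto (fun w : ℕ => x ^ (2 * w)) atTop (𝓝 0) := by
    simp only [pow_mul]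
    refine tendsto_pow_atTop_nhds_zero_of_lt_one (sq_nonneg x) ?_
    simpa [sq_abs] using pow_lt_one₀ (abs_nonneg x) hx two_ne_zero
  simpa [Dreal] using tendsto_const_nhds.sub (tendsto_const_nhds.mul hpow)

lemma eventually_exists_roots_Dreal (hlam : 1 < lam) (hmu : 1 < mu) :
    ∀ᶠ w in atTop, ∃ s₁ s₂ : ℝ, 0 < s₁ ∧ s₁ < s₂ ∧ s₂ < 1 ∧
      Dreal lam mu w s₁ = 0 ∧ Dreal lam mu w s₂ = 0 := by
  obtain ⟨c, hc, hc1⟩ := exists_between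
    (max_lt (inv_lt_one_of_one_lt₀ hlam) (inv_lt_one_of_one_lt₀ hmu))
  rw [max_lt_iff] at hc
  have hlamc : 1 < lam * c := by rw [← inv_mul_lt_iff₀ (by linarith)]; simpa using hc.1
  have hmuc : 1 < mu * c := by rw [← inv_mul_lt_iff₀ (by linarith)]; simpa using hc.2
  have hc₀ : 0 < c := (inv_pos.2 (by linarith)).trans hc.1
  have hlim : 0 < (1 - lam ^ 2 * c ^ 2) * (1 - mu ^ 2 * c ^ 2) :=
    mul_pos_of_neg_of_neg (by nlinarith) (by nlinarith)
  have habs : |c| < 1 := by rwa [abs_of_pos hc₀]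
  filter_upwards [(tendsto_Dreal_atTop habs).eventually_const_lt hlim, eventually_ne_atTop 0]
    with w hwc hw
  have hneg := Dreal_inv_neg (w := w) hlam ((inv_lt_one_of_one_lt₀ hlam).trans hmu)
  obtain ⟨s₁, hs₁, hDs₁⟩ := intermediate_value_Ioo' (inv_pos.2 (by linarith)).le
    continuous_Dreal.continuousOn ⟨hneg, (Dreal_zero hw).symm ▸ one_pos⟩
  obtain ⟨s₂, hs₂, hDs₂⟩ := intermediate_value_Ioo hc.1.le
    continuous_Dreal.continuousOn ⟨hneg, hwc⟩
  exact ⟨s₁, s₂, hs₁.1, hs₁.2.trans hs₂.1, hs₂.2.trans hc1, hDs₁, hDs₂⟩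

lemma Dreal_inv_eq_zero {x : ℝ} (hx : x ≠ 0) (h : Dreal lam mu w x = 0) :
    Dreal lam mu w x⁻¹ = 0 := by
  have := pow_mul_Dreal_inv (lam := lam) (mu := mu) (w := w) hx
  rw [h, neg_zero] at this
  exact (mul_eq_zero.1 this).resolve_left (pow_ne_zero _ hx)

lemma abs_ne_one_and_Dreal_eq_zero_of_mem {s : ℝ} (hs₀ : 0 < s) (hs₁ : s < 1)
    (hs : Dreal lam mu w s = 0) {r : ℝ} (hr : r ∈ ({s, -s, s⁻¹, -s⁻¹} : Set ℝ)) :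
    |r| ≠ 1 ∧ Dreal lam mu w r = 0 := by
  have hinv : 1 < s⁻¹ := (one_lt_inv₀ hs₀).2 hs₁
  have hs' := Dreal_inv_eq_zero hs₀.ne' hs
  rcases hr with rfl | rfl | rfl | rfl <;>
    simp only [abs_neg, Dreal_neg, abs_of_pos hs₀, abs_of_pos (inv_pos.2 hs₀)] <;>
    first | exact ⟨hs₁.ne, hs⟩ | exact ⟨hinv.ne', hs'⟩

lemma exists_finset_real_roots {s₁ s₂ : ℝ} (h₀ : 0 < s₁) (h₁₂ : s₁ < s₂) (h₂ : s₂ < 1)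
    (hs₁ : Dreal lam mu w s₁ = 0) (hs₂ : Dreal lam mu w s₂ = 0) :
    ∃ R : Finset ℂ, R.card = 8 ∧ ∀ z ∈ R, ‖z‖ ≠ 1 ∧ z.im = 0 ∧ (Dpoly lam mu w).IsRoot z := by
  set L : List ℝ := [-s₁⁻¹, -s₂⁻¹, -s₂, -s₁, s₁, s₂, s₂⁻¹, s₁⁻¹]
  have hinv : s₂⁻¹ < s₁⁻¹ := inv_strictAnti₀ h₀ h₁₂
  have hinv₂ : 1 < s₂⁻¹ := (one_lt_inv₀ (h₀.trans h₁₂)).2 h₂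
  have hsorted : L.IsChain (· < ·) := by
    simp only [L, List.isChain_cons_cons, List.IsChain.singleton, and_true]
    refine ⟨?_, ?_, ?_, ?_, ?_, ?_, ?_⟩ <;> linarith
  have hL : ∀ r ∈ L, |r| ≠ 1 ∧ Dreal lam mu w r = 0 := by
    intro r hr
    have hr' : r ∈ ({s₁, -s₁, s₁⁻¹, -s₁⁻¹} : Set ℝ) ∨ r ∈ ({s₂, -s₂, s₂⁻¹, -s₂⁻¹} : Set ℝ) := by
      simp only [L, List.mem_cons, List.not_mem_nil, or_false] at hr
      simp only [Set.mem_insert_iff, Set.mem_singleton_iff]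
      tauto
    rcases hr' with hr' | hr'
    · exact abs_ne_one_and_Dreal_eq_zero_of_mem h₀ (h₁₂.trans h₂) hs₁ hr'
    · exact abs_ne_one_and_Dreal_eq_zero_of_mem (h₀.trans h₁₂) h₂ hs₂ hr'
  refine ⟨L.toFinset.map ⟨ofReal, ofReal_injective⟩, ?_, ?_⟩
  · rw [Finset.card_map, List.toFinset_card_of_nodup
      ((List.isChain_iff_pairwise.1 hsorted).imp ne_of_lt)]
    rfl
  · intro z hz
    obtain ⟨r, hr, rfl⟩ := Finset.mem_map.1 hz
    obtain ⟨habs, hroot⟩ := hL r (List.mem_toFinset.1 hr)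
    refine ⟨by simpa using habs, ofReal_im r, ?_⟩
    simp only [Function.Embedding.coeFn_mk, IsRoot, eval_Dpoly_ofReal, hroot, ofReal_zero]

end Real

noncomputable def phase (a b : ℝ) (m : ℕ) (t : ℝ) : ℝ :=
  m * t + arg (a - cexp (↑(2 * t) * I)) + arg (b - cexp (↑(2 * t) * I))

section Phase

variable {a b : ℝ}

lemma sub_exp_mem_slitPlane (ha : 1 < a) (t : ℝ) : (a : ℂ) - cexp (t * I) ∈ slitPlane := by
  refine mem_slitPlane_iff.2 (Or.inl ?_)
  rw [sub_re, ofReal_re, exp_ofReal_mul_I_re]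
  linarith [Real.cos_le_one t]

lemma continuous_phase (ha : 1 < a) (hb : 1 < b) (m : ℕ) : Continuous (phase a b m) := by
  have harg : ∀ c : ℝ, 1 < c → Continuous fun t : ℝ => arg (c - cexp (↑(2 * t) * I)) :=
    fun c hc => continuous_iff_continuousAt.2 fun t =>
      (continuousAt_arg (sub_exp_mem_slitPlane hc (2 * t))).comp
        (f := fun t : ℝ => (c : ℂ) - cexp (↑(2 * t) * I)) (by fun_prop)
  exact ((continuous_const.mul continuous_id).add (harg a ha)).add (harg b hb)

lemma arg_sub_one (ha : 1 < a) : arg ((a : ℂ) - 1) = 0 := by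
  rw [← ofReal_one, ← ofReal_sub, arg_ofReal_of_nonneg (by linarith)]

lemma phase_zero (ha : 1 < a) (hb : 1 < b) (m : ℕ) : phase a b m 0 = 0 := by
  simp [phase, arg_sub_one ha, arg_sub_one hb]

lemma phase_two_pi (ha : 1 < a) (hb : 1 < b) (m : ℕ) : phase a b m (2 * π) = m * (2 * π) := by
  have h : cexp (↑(2 * (2 * π)) * I) = 1 := by
    rw [← exp_nat_mul_two_pi_mul_I 2]; push_cast; ring_nf
  rw [phase, h, arg_sub_one ha, arg_sub_one hb]
  ring

end Phase

section Circle

variable {lam mu : ℝ}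

lemma isRoot_Dpoly_of_im_eq_zero {m : ℕ} {E : ℂ} (hE : ‖E‖ = 1)
    (h : (E ^ m * (((lam : ℂ) ^ 2 - E ^ 2) * ((mu : ℂ) ^ 2 - E ^ 2))).im = 0) :
    (Dpoly lam mu (m + 2)).IsRoot E := by
  have hE₀ : E ≠ 0 := by rintro rfl; simp at hE
  have hconj := conj_eq_iff_im.2 h
  simp only [map_mul, map_sub, map_pow, conj_ofReal, ← inv_eq_conj hE] at hconj
  set F := E⁻¹
  have hEF : E * F = 1 := mul_inv_cancel₀ hE₀
  have hEFm : E ^ m * F ^ m = 1 := by rw [← mul_pow, hEF, one_pow]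
  rw [IsRoot, eval_Dpoly]
  linear_combination E ^ (m + 4) * hconj
    - E ^ 4 * (((lam : ℂ) ^ 2 - F ^ 2) * ((mu : ℂ) ^ 2 - F ^ 2)) * hEFm
    + (E * F + 1) * ((lam : ℂ) ^ 2 * E ^ 2 + (mu : ℂ) ^ 2 * E ^ 2 - 1 - (E * F) ^ 2) * hEF

lemma isRoot_Dpoly_exp_of_phase_eq {m k : ℕ} {t : ℝ}
    (h : phase (lam ^ 2) (mu ^ 2) m t = k * π) :
    (Dpoly lam mu (m + 2)).IsRoot (cexp (t * I)) := by
  refine isRoot_Dpoly_of_im_eq_zero (norm_exp_ofReal_mul_I t) ?_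
  have hpow : ∀ n : ℕ, cexp (t * I) ^ n = cexp (↑(n * t) * I) := fun n => by
    rw [← exp_nat_mul]; push_cast; ring_nf
  have hsq : cexp (t * I) ^ 2 = cexp (↑(2 * t) * I) := by simpa using hpow 2
  have hpolar : cexp (t * I) ^ m * (((lam : ℂ) ^ 2 - cexp (t * I) ^ 2) *
      ((mu : ℂ) ^ 2 - cexp (t * I) ^ 2)) =
      ↑(‖(lam ^ 2 : ℝ) - cexp (↑(2 * t) * I)‖ * ‖(mu ^ 2 : ℝ) - cexp (↑(2 * t) * I)‖) *
        cexp (↑(phase (lam ^ 2) (mu ^ 2) m t) * I) := by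
    rw [hpow, hsq, ← ofReal_pow, ← ofReal_pow]
    conv_lhs => rw [← norm_mul_exp_arg_mul_I ((lam ^ 2 : ℝ) - _),
      ← norm_mul_exp_arg_mul_I ((mu ^ 2 : ℝ) - _)]
    simp only [phase, ofReal_add, ofReal_mul, ofReal_natCast, add_mul, exp_add]
    ring
  rw [hpolar, im_ofReal_mul, exp_ofReal_mul_I_im, h, Real.sin_nat_mul_pi, mul_zero]

lemma exists_finset_circle_roots (hlam : 1 < lam) (hmu : 1 < mu) (m : ℕ) :
    ∃ S : Finset ℂ, S.card = 2 * m ∧ ∀ z ∈ S, ‖z‖ = 1 ∧ (Dpoly lam mu (m + 2)).IsRoot z := by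
  have ha : 1 < lam ^ 2 := one_lt_pow₀ hlam two_ne_zero
  have hb : 1 < mu ^ 2 := one_lt_pow₀ hmu two_ne_zero
  have hT : ∀ k < 2 * m, ∃ t ∈ Set.Ico 0 (2 * π), phase (lam ^ 2) (mu ^ 2) m t = k * π := by
    intro k hk
    refine intermediate_value_Ico Real.two_pi_pos.le (continuous_phase ha hb m).continuousOn ?_
    have hk' : (k : ℝ) < 2 * m := by exact_mod_cast hk
    rw [phase_zero ha hb, phase_two_pi ha hb]
    constructor <;> nlinarith [Real.pi_pos]
  choose! T hTmem hTphase using hT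
  refine ⟨(Finset.range (2 * m)).image fun k => cexp (T k * I), ?_, ?_⟩
  · rw [Finset.card_image_of_injOn, Finset.card_range]
    intro k hk k' hk' heq
    rw [Finset.coe_range, Set.mem_Iio] at hk hk'
    have hTT : T k = T k' :=
      Circle.exp_injOn_Ico (by simp) (hTmem k hk) (hTmem k' hk') (Circle.ext heq)
    have hkk : (k : ℝ) * π = k' * π := by rw [← hTphase k hk, ← hTphase k' hk', hTT]
    exact_mod_cast mul_right_cancel₀ Real.pi_ne_zero hkk
  · simp only [Finset.mem_image, Finset.mem_range, forall_exists_index, and_imp]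
    rintro _ k hk rfl
    exact ⟨norm_exp_ofReal_mul_I _, isRoot_Dpoly_exp_of_phase_eq (hTphase k hk)⟩

end Circle

open scoped Classical in
/-- for `λ > 1` and `μ > 1`, for all sufficiently large `w` the polynomial
`D_w` has exactly `2w − 4` roots (with multiplicity) on the unit circle and exactly `8`
roots off the unit circle, all of which are real. -/
theorem root_count_both_adsorbed (lam mu : ℝ) (hlam : 1 < lam) (hmu : 1 < mu) :
    ∃ W : ℕ, ∀ w : ℕ, W ≤ w →
      ((Dpoly lam mu w).roots.filter (fun p => ‖p‖ = 1)).card = 2 * w - 4 ∧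
      ((Dpoly lam mu w).roots.filter (fun p => ‖p‖ ≠ 1)).card = 8 ∧
      ∀ p ∈ (Dpoly lam mu w).roots, ‖p‖ ≠ 1 → p.im = 0 := by
  obtain ⟨W, hW⟩ := eventually_atTop.1 (eventually_exists_roots_Dreal hlam hmu)
  refine ⟨max W 2, fun w hw => ?_⟩
  obtain ⟨m, rfl⟩ : ∃ m, w = m + 2 := ⟨w - 2, by omega⟩
  obtain ⟨s₁, s₂, h₀, h₁₂, h₂, hs₁, hs₂⟩ := hW (m + 2) (le_of_max_le_left hw)
  obtain ⟨R, hRcard, hR⟩ := exists_finset_real_roots h₀ h₁₂ h₂ hs₁ hs₂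
  obtain ⟨S, hScard, hS⟩ := exists_finset_circle_roots hlam hmu m
  have hdisj : Disjoint S R := Finset.disjoint_left.2 fun z hzS hzR => (hR z hzR).1 (hS z hzS).1
  have hroots : (Dpoly lam mu (m + 2)).roots = S.val + R.val := by
    refine roots_eq_val_of_natDegree_le_card (s := S.disjUnion R hdisj) (Dpoly_ne_zero (by omega))
      ?_ fun z hz => ?_
    · rw [Finset.card_disjUnion, hScard, hRcard]
      exact natDegree_Dpoly_le.trans (by omega)
    · rcases Finset.mem_disjUnion.1 hz with hz | hz
      exacts [(hS z hz).2, (hR z hz).2.2]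
  refine ⟨?_, ?_, fun p hp hp1 => ?_⟩
  · rw [hroots, Multiset.filter_add_of_forall (fun z hz => (hS z hz).1) fun z hz => (hR z hz).1]
    rw [Finset.card_val, hScard]
    omega
  · rw [hroots, add_comm, Multiset.filter_add_of_forall (fun z hz => (hR z hz).1)
      fun z hz => not_not.2 (hS z hz).1]
    exact hRcard
  · rw [hroots, Multiset.mem_add] at hp
    exact hp.elim (fun hpS => absurd (hS p hpS).1 hp1) fun hpR => (hR p hpR).2.1
end

section
/- For every integer w ≥ 1 and every even integer n ≥ 0, the partition function of loops satisfies Z_{n,w}(2,2) = (2^{n}/w) · Σ_{k=0}^{w−1} cosⁿ(kπ/w). -/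
/-- A loop of length `n` in the slit of width `w`: a nearest-neighbour path of heights
`h 0, …, h n` with `h 0 = h n = 0` and all heights in `{0, …, w}` (enforced by taking
values in `Fin (w+1)`). -/
def IsLoop {n w : ℕ} (h : Fin (n + 1) → Fin (w + 1)) : Prop :=
  h 0 = 0 ∧ h (Fin.last n) = 0 ∧
    ∀ i : Fin n, |((h i.succ : ℤ) - (h i.castSucc : ℤ))| = 1

instance {n w : ℕ} (h : Fin (n + 1) → Fin (w + 1)) : Decidable (IsLoop h) := by
  unfold IsLoop; infer_instance

/-- The partition function of loops,
`Z_{n,w}(a,b) = Σ_h a^{u(h)} b^{v(h)}`, where `u(h)` counts visits to the bottom wall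
(excluding the zeroth vertex) and `v(h)` counts visits to the top wall. -/
noncomputable def Z (n w : ℕ) (a b : ℝ) : ℝ :=
  ∑ h : Fin (n + 1) → Fin (w + 1),
    if IsLoop h then
      a ^ (Finset.univ.filter fun i : Fin (n + 1) => i ≠ 0 ∧ (h i : ℕ) = 0).card *
      b ^ (Finset.univ.filter fun i : Fin (n + 1) => (h i : ℕ) = w).card
    else 0

/-!
Fold the cycle `ℤ/2wℤ` onto the slit by `x ↦ min(x, 2w - x)`. The two neighbours of a cycle
vertex fold onto the two neighbours of its image, except at a wall, where both fold onto the
single neighbour of the wall. So if `T` is the transfer matrix of the slit in which a step onto a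
wall has weight `2`, `C` the adjacency matrix of the cycle and `F` the folding matrix, then
`T F = F C`, and `Z_{n,w}(2,2) = (Tⁿ)₀₀ = (Cⁿ)₀₀` is the number of closed walks of length `n` on
the cycle. The characters of `ℤ/2wℤ` diagonalise `C` with eigenvalues `2 cos (πj/w)`, whence
`2w (Cⁿ)₀₀ = Σ_{j<2w} (2 cos (πj/w))ⁿ`; for even `n` the terms `j` and `j + w` coincide.
-/

open Finset Matrix Real

theorem Matrix.pow_apply_eq_sum_paths {α R : Type*} [Fintype α] [DecidableEq α] [CommSemiring R]
    (M : Matrix α α R) (n : ℕ) (a b : α) :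
    (M ^ n) a b = ∑ h : Fin (n + 1) → α,
      if h 0 = a ∧ h (Fin.last n) = b then ∏ i : Fin n, M (h i.castSucc) (h i.succ) else 0 := by
  induction n generalizing a with
  | zero =>
    rw [pow_zero, one_apply, ← (Equiv.funUnique (Fin 1) α).symm.sum_comp,
      Fintype.sum_eq_single a fun x hx => by simp [hx]]
    simp
  | succ n ih =>
    rw [pow_succ', mul_apply, ← (Fin.consEquiv fun _ => α).sum_comp, Fintype.sum_prod_type]
    simp only [ih, mul_sum, mul_ite, mul_zero, Fin.consEquiv_apply, Fin.prod_univ_succ,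
      ← Fin.succ_last, ← Fin.succ_castSucc, Fin.castSucc_zero, Fin.cons_zero, Fin.cons_succ, ite_and]
    rw [sum_comm]
    conv_rhs => rw [sum_comm]
    simp only [sum_ite_eq, sum_ite_eq', mem_univ, if_true]

/-- Each step carries the weight of the vertex it enters, so a path from `0` collects the weights
of its visits at times `1, …, n`, as in `Z`. -/
def slitTransfer (R : Type*) [Semiring R] (w : ℕ) (a b : R) :
    Matrix (Fin (w + 1)) (Fin (w + 1)) R :=
  of fun x y => if |(y : ℤ) - x| = 1 then
    (if (y : ℕ) = 0 then a else 1) * (if (y : ℕ) = w then b else 1) else 0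

theorem Z_eq_slitTransfer_pow {w : ℕ} (hw : 1 ≤ w) (n : ℕ) (a b : ℝ) :
    Z n w a b = (slitTransfer ℝ w a b ^ n) 0 0 := by
  rw [Z, pow_apply_eq_sum_paths]
  refine Fintype.sum_congr _ _ fun h => ?_
  by_cases ends : h 0 = 0 ∧ h (Fin.last n) = 0
  · have h0 : (h 0 : ℕ) = 0 := by rw [ends.1]; rfl
    simp only [IsLoop, ends, true_and, if_true]
    split_ifs with steps
    · rw [Fin.card_filter_univ_succ', Fin.card_filter_univ_succ', h0, if_neg (by omega : 0 ≠ w)]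
      simp only [ne_eq, not_true_eq_false, false_and, if_false, Fin.succ_ne_zero,
        not_false_eq_true, true_and, zero_add]
      rw [← prod_const, ← prod_const, prod_filter, prod_filter, ← prod_mul_distrib]
      exact prod_congr rfl fun i _ => by simp [slitTransfer, steps i]
    · obtain ⟨i, hi⟩ := not_forall.1 steps
      exact (prod_eq_zero (mem_univ i) (by simp [slitTransfer, hi])).symm
  · rw [if_neg fun hL => ends ⟨hL.1, hL.2.1⟩, if_neg ends]

lemma ZMod.val_add_one_eq_or {N : ℕ} [NeZero N] (x : ZMod N) :
    (x + 1).val = x.val + 1 ∨ (x + 1).val = 0 ∧ x.val + 1 = N := by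
  have hx := x.val_lt
  have hcast : x + 1 = ((x.val + 1 : ℕ) : ZMod N) := by push_cast [ZMod.natCast_zmod_val]; rfl
  rw [hcast, ZMod.val_natCast]
  rcases Nat.lt_or_ge (x.val + 1) N with h | h
  · exact Or.inl (Nat.mod_eq_of_lt h)
  · have h : x.val + 1 = N := by omega
    exact Or.inr ⟨by rw [h, Nat.mod_self], h⟩

def cycleAdj (R : Type*) [Semiring R] (N : ℕ) : Matrix (ZMod N) (ZMod N) R :=
  of fun x y => (if y = x + 1 then 1 else 0) + (if y = x - 1 then 1 else 0)

def slitFold (w : ℕ) (x : ZMod (2 * w)) : Fin (w + 1) :=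
  ⟨min x.val (2 * w - x.val), by omega⟩

def slitFoldMatrix (R : Type*) [Semiring R] (w : ℕ) : Matrix (Fin (w + 1)) (ZMod (2 * w)) R :=
  of fun z x => if slitFold w x = z then 1 else 0

section Fold

variable {R : Type*} [Semiring R] {w : ℕ} [NeZero w]

lemma slitFold_eq_zero_iff {x : ZMod (2 * w)} : slitFold w x = 0 ↔ x = 0 := by
  rw [Fin.ext_iff, ← ZMod.val_eq_zero]
  have := x.val_lt
  simp only [slitFold, Fin.val_zero]
  omega

lemma slitTransfer_apply_slitFold (z : Fin (w + 1)) (x : ZMod (2 * w)) :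
    slitTransfer R w 2 2 z (slitFold w x) =
      (if slitFold w (x - 1) = z then 1 else 0) + (if slitFold w (x + 1) = z then 1 else 0) := by
  have hup := ZMod.val_add_one_eq_or x
  have hdown := ZMod.val_add_one_eq_or (x - 1)
  rw [sub_add_cancel] at hdown
  have := x.val_lt
  have := (x + 1).val_lt
  have := (x - 1).val_lt
  have := z.isLt
  simp only [slitTransfer, of_apply, slitFold, Fin.ext_iff, abs_eq zero_le_one]
  split_ifs <;> first | (exfalso; omega) | norm_num

theorem slitTransfer_mul_slitFoldMatrix :
    slitTransfer R w 2 2 * slitFoldMatrix R w = slitFoldMatrix R w * cycleAdj R (2 * w) := by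
  ext z y
  have hsub (x : ZMod (2 * w)) : y = x + 1 ↔ x = y - 1 := eq_comm.trans eq_sub_iff_add_eq.symm
  have hadd (x : ZMod (2 * w)) : y = x - 1 ↔ x = y + 1 := eq_comm.trans sub_eq_iff_eq_add
  simp only [mul_apply, slitFoldMatrix, cycleAdj, of_apply, hsub, hadd, mul_ite, mul_one,
    mul_zero, mul_add, sum_add_distrib, sum_ite_eq, sum_ite_eq', mem_univ, if_true]
  exact slitTransfer_apply_slitFold z y

theorem slitTransfer_pow_mul_slitFoldMatrix (n : ℕ) :
    slitTransfer R w 2 2 ^ n * slitFoldMatrix R w =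
      slitFoldMatrix R w * cycleAdj R (2 * w) ^ n := by
  induction n with
  | zero => simp
  | succ n ih =>
    rw [pow_succ, Matrix.mul_assoc, slitTransfer_mul_slitFoldMatrix, ← Matrix.mul_assoc, ih,
      Matrix.mul_assoc, ← pow_succ]

theorem slitTransfer_pow_apply_zero_zero (n : ℕ) :
    (slitTransfer R w 2 2 ^ n) 0 0 = (cycleAdj R (2 * w) ^ n) 0 0 := by
  have h := congrFun (congrFun (slitTransfer_pow_mul_slitFoldMatrix (R := R) (w := w) n) 0) 0
  have h0 : slitFold w 0 = 0 := slitFold_eq_zero_iff.2 rfl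
  simpa [mul_apply, slitFoldMatrix, slitFold_eq_zero_iff, h0] using h

end Fold

theorem cycleAdj_map {R S : Type*} [Semiring R] [Semiring S] (f : R →+* S) (N : ℕ) :
    (cycleAdj R N).map f = cycleAdj S N := by
  ext x y
  simp only [map_apply, cycleAdj, of_apply, map_add, apply_ite f, map_one, map_zero]

section Spectrum

variable {R : Type*} [CommRing R] {N : ℕ} [NeZero N]

theorem cycleAdj_mulVec_addChar (ψ : AddChar (ZMod N) R) :
    cycleAdj R N *ᵥ ψ = (ψ 1 + ψ (-1)) • ⇑ψ := by
  ext x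
  simp only [mulVec, dotProduct, cycleAdj, of_apply, add_mul, ite_mul, one_mul, zero_mul,
    sum_add_distrib, sum_ite_eq', mem_univ, if_true, Pi.smul_apply, smul_eq_mul, sub_eq_add_neg,
    AddChar.map_add_eq_mul]
  ring

theorem cycleAdj_pow_mulVec_addChar (ψ : AddChar (ZMod N) R) (n : ℕ) :
    cycleAdj R N ^ n *ᵥ ψ = (ψ 1 + ψ (-1)) ^ n • ⇑ψ := by
  induction n with
  | zero => simp
  | succ n ih =>
    rw [pow_succ', ← mulVec_mulVec, ih, mulVec_smul, cycleAdj_mulVec_addChar, smul_smul, pow_succ]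

theorem sum_mulShift_eq_smul_single [IsDomain R] {ψ : AddChar (ZMod N) R}
    (hψ : ψ.IsPrimitive) : ∑ j, ⇑(ψ.mulShift j) = (N : R) • Pi.single 0 1 := by
  ext x
  simp only [Finset.sum_apply, AddChar.mulShift_apply, AddChar.sum_mulShift x hψ, ZMod.card,
    Nat.cast_ite, Nat.cast_zero, Pi.smul_apply, Pi.single_apply, smul_eq_mul, mul_ite, mul_one,
    mul_zero]

theorem natCast_mul_cycleAdj_pow_apply_zero_zero [IsDomain R] {ψ : AddChar (ZMod N) R}
    (hψ : ψ.IsPrimitive) (n : ℕ) :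
    (N : R) * (cycleAdj R N ^ n) 0 0 = ∑ j, (ψ j + ψ (-j)) ^ n := by
  calc (N : R) * (cycleAdj R N ^ n) 0 0
      = (cycleAdj R N ^ n *ᵥ ((N : R) • Pi.single 0 1)) 0 := by
        rw [mulVec_smul, mulVec_single_one]; rfl
    _ = ∑ j, (ψ j + ψ (-j)) ^ n := by
        rw [← sum_mulShift_eq_smul_single hψ, mulVec_sum, Finset.sum_apply]
        refine sum_congr rfl fun j _ => ?_
        simp [cycleAdj_pow_mulVec_addChar, AddChar.mulShift_apply]

end Spectrum

lemma ZMod.sum_univ_eq_sum_range {M : Type*} [AddCommMonoid M] {N : ℕ} [NeZero N]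
    (f : ZMod N → M) : ∑ j, f j = ∑ k ∈ range N, f k :=
  sum_nbij' ZMod.val (↑) (fun j _ => mem_range.2 j.val_lt) (fun _ _ => mem_univ _)
    (fun j _ => ZMod.natCast_zmod_val j) (fun _ hk => ZMod.val_cast_of_lt (mem_range.1 hk))
    (fun j _ => by rw [ZMod.natCast_zmod_val])

lemma ZMod.stdAddChar_add_stdAddChar_neg (N : ℕ) [NeZero N] (k : ℕ) :
    ZMod.stdAddChar (k : ZMod N) + ZMod.stdAddChar (-(k : ZMod N)) =
      ((2 * cos (2 * π * k / N) : ℝ) : ℂ) := by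
  have hneg : -(k : ZMod N) = ((-k : ℤ) : ZMod N) := by push_cast; rfl
  rw [hneg, ← Int.cast_natCast, ZMod.stdAddChar_coe, ZMod.stdAddChar_coe]
  push_cast
  rw [Complex.two_cos]
  congr 2 <;> ring

theorem natCast_mul_cycleAdj_pow_apply_zero_zero_eq_sum_cos (N : ℕ) [NeZero N] (n : ℕ) :
    (N : ℝ) * (cycleAdj ℝ N ^ n) 0 0 = 2 ^ n * ∑ k ∈ range N, cos (2 * π * k / N) ^ n := by
  apply Complex.ofReal_injective
  have hmap : ((cycleAdj ℝ N ^ n) 0 0 : ℂ) = (cycleAdj ℂ N ^ n) 0 0 := by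
    rw [← cycleAdj_map Complex.ofRealHom, ← Matrix.map_pow]; rfl
  push_cast [hmap]
  rw [natCast_mul_cycleAdj_pow_apply_zero_zero (ZMod.isPrimitive_stdAddChar N),
    ZMod.sum_univ_eq_sum_range, mul_sum]
  refine sum_congr rfl fun k _ => ?_
  rw [ZMod.stdAddChar_add_stdAddChar_neg, ← mul_pow]
  push_cast
  rfl

lemma sum_range_two_mul_cos_pow_of_even {n : ℕ} (hn : Even n) (w : ℕ) :
    ∑ k ∈ range (2 * w), cos (k * π / w) ^ n = 2 * ∑ k ∈ range w, cos (k * π / w) ^ n := by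
  rw [two_mul, sum_range_add, two_mul]
  congr 1
  refine sum_congr rfl fun k hk => ?_
  have hw : (w : ℝ) ≠ 0 := Nat.cast_ne_zero.2 (by have := mem_range.1 hk; omega)
  rw [show ((w + k : ℕ) : ℝ) * π / w = k * π / w + π by push_cast; field_simp; ring, cos_add_pi,
    hn.neg_pow]

/-- exact expression for `Z_{n,w}(2,2)` for even `n`. -/
theorem Z_two_two (w n : ℕ) (hw : 1 ≤ w) (hn : Even n) :
    Z n w 2 2 = 2 ^ n / (w : ℝ) *
      ∑ k ∈ Finset.range w,
        Real.cos ((k : ℝ) * Real.pi / (w : ℝ)) ^ n := by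
  have : NeZero w := ⟨by omega⟩
  have hw0 : (w : ℝ) ≠ 0 := Nat.cast_ne_zero.2 (by omega)
  have hangle (k : ℕ) : 2 * π * k / ((2 * w : ℕ) : ℝ) = k * π / w := by
    push_cast; field_simp
  have closed_walks := natCast_mul_cycleAdj_pow_apply_zero_zero_eq_sum_cos (2 * w) n
  simp only [hangle, sum_range_two_mul_cos_pow_of_even hn] at closed_walks
  push_cast at closed_walks
  rw [Z_eq_slitTransfer_pow hw, slitTransfer_pow_apply_zero_zero]
  field_simp
  linarith
end
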